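/- The homodyne Fisher information H_η = 2η²(1+2N_B-r)² / (η²r + (1-η²)(1+2N_B))² + 4N_coh / (η²r + (1-η²)(1+2N_B)) satisfies H_η ≥ 0, and for fixed r ∈ (0,1], N_coh ≥ 0, N_B ≥ 0, the ratio H_η / [4N_S/((1-η²)(1+2N_B))] tends to 0 as η → 1⁻ whenever N_coh and r are fixed; i.e., H_η stays bounded as η → 1 while the optimal QFI diverges like (1-η²)⁻¹. -/

import Mathlib

noncomputable def Hhom (NB r Ncoh η : ℝ) : ℝ :=
  2*η^2*(1 + 2*NB - r)^2 / (η^2*r + (1-η^2)*(1+2*NB))^2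
    + 4*Ncoh / (η^2*r + (1-η^2)*(1+2*NB))

/-!
The homodyne variance `η²r + (1-η²)(1+2N_B)` is a convex combination of the squeezed variance `r`
and the thermal variance `1 + 2N_B`, so on `η² ≤ 1` it stays above `min r (1 + 2N_B) > 0`.
Hence `H_η` is bounded and continuous up to `η = 1`, while the quantum Fisher information
blows up like `(1 - η²)⁻¹`: their ratio is `H_η (1 - η²)` up to constants, which tends to `0`.
-/

open Filter Topology

section Hhom

variable {NB r Ncoh η : ℝ}

def homodyneVariance (NB r η : ℝ) : ℝ := η^2*r + (1-η^2)*(1+2*NB)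

lemma Hhom_eq (NB r Ncoh η : ℝ) :
    Hhom NB r Ncoh η = 2*η^2*(1 + 2*NB - r)^2 / homodyneVariance NB r η ^ 2
      + 4*Ncoh / homodyneVariance NB r η := rfl

lemma homodyneVariance_one (NB r : ℝ) : homodyneVariance NB r 1 = r := by
  simp [homodyneVariance]

lemma min_le_homodyneVariance (h0 : 0 ≤ η^2) (h1 : η^2 ≤ 1) :
    min r (1 + 2*NB) ≤ homodyneVariance NB r η :=
  Convex.min_le_combo r (1 + 2*NB) h0 (sub_nonneg.2 h1) (add_sub_cancel _ _)

lemma Hhom_nonneg (hNcoh : 0 ≤ Ncoh) (hV : 0 < homodyneVariance NB r η) :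
    0 ≤ Hhom NB r Ncoh η := by
  rw [Hhom_eq]
  positivity

lemma Hhom_le (hNcoh : 0 ≤ Ncoh) {m : ℝ} (hm : 0 < m) (hmV : m ≤ homodyneVariance NB r η)
    (hη : η^2 ≤ 1) :
    Hhom NB r Ncoh η ≤ 2*(1 + 2*NB - r)^2 / m^2 + 4*Ncoh / m := by
  rw [Hhom_eq]
  gcongr ?_ / ?_ + 4*Ncoh / ?_
  · nlinarith [sq_nonneg (1 + 2*NB - r)]
  · exact pow_le_pow_left₀ hm.le hmV 2

lemma continuousAt_Hhom (hV : homodyneVariance NB r η ≠ 0) :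
    ContinuousAt (Hhom NB r Ncoh) η := by
  simp only [funext (Hhom_eq NB r Ncoh), homodyneVariance] at hV ⊢
  fun_prop (disch := first | exact hV | exact pow_ne_zero 2 hV)

end Hhom

theorem homodyne_no_divergence_general (NB r Ncoh : ℝ)
    (hr0 : 0 < r) (hNcoh : 0 ≤ Ncoh) (hNB : 0 ≤ NB) :
    (∀ η ∈ Set.Ico (0:ℝ) 1, 0 ≤ Hhom NB r Ncoh η) ∧
    (∃ C : ℝ, ∀ η ∈ Set.Ico (0:ℝ) 1, Hhom NB r Ncoh η ≤ C) ∧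
    Filter.Tendsto
      (fun η => Hhom NB r Ncoh η /
        (4*(Ncoh + (r + r⁻¹ - 2)/4) / ((1-η^2)*(1+2*NB))))
      (nhdsWithin 1 (Set.Iio 1)) (nhds 0) := by
  set m := min r (1 + 2*NB)
  have hm : 0 < m := lt_min hr0 (by linarith)
  have hmV : ∀ η ∈ Set.Ico (0:ℝ) 1, m ≤ homodyneVariance NB r η := fun η hη =>
    min_le_homodyneVariance (sq_nonneg η) (pow_le_one₀ hη.1 hη.2.le)
  refine ⟨fun η hη => Hhom_nonneg hNcoh (hm.trans_le (hmV η hη)),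
    ⟨_, fun η hη => Hhom_le hNcoh hm (hmV η hη) (pow_le_one₀ hη.1 hη.2.le)⟩, ?_⟩
  have hHom : ContinuousAt (Hhom NB r Ncoh) 1 :=
    continuousAt_Hhom (by rw [homodyneVariance_one]; exact hr0.ne')
  have hprod : Tendsto (fun η => Hhom NB r Ncoh η * ((1-η^2)*(1+2*NB))) (𝓝 1) (𝓝 0) := by
    simpa using hHom.tendsto.mul (by fun_prop : Continuous fun η : ℝ => (1-η^2)*(1+2*NB)).continuousAt
  simp_rw [div_div_eq_mul_div]
  simpa using (hprod.div_const _).mono_left nhdsWithin_le_nhds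

theorem homodyne_no_divergence (NB r Ncoh : ℝ)
    (hr0 : 0 < r) (hr1 : r ≤ 1) (hNcoh : 0 ≤ Ncoh) (hNB : 0 ≤ NB) :
    (∀ η ∈ Set.Ico (0:ℝ) 1, 0 ≤ Hhom NB r Ncoh η) ∧
    (∃ C : ℝ, ∀ η ∈ Set.Ico (0:ℝ) 1, Hhom NB r Ncoh η ≤ C) ∧
    Filter.Tendsto
      (fun η => Hhom NB r Ncoh η /
        (4*(Ncoh + (r + r⁻¹ - 2)/4) / ((1-η^2)*(1+2*NB))))
      (nhdsWithin 1 (Set.Iio 1)) (nhds 0) :=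
  homodyne_no_divergence_general NB r Ncoh hr0 hNcoh hNB
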